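/- Let n ≥ 1 and let f, g be permutations of [n] that generate the full symmetric group Sym(n). Let G be the HRG with single nonterminal S, single terminal a, type(S) = type(a) = [n], and the three productions p(f), p(g), and S → a•. Then L(G) = {F(a,h) | h ∈ Sym(n)}; moreover F(a,h) and F(a,h′) are isomorphic if and only if h = h′, so L(G) contains exactly n! pairwise non-isomorphic hypergraphs, while G has only 3 productions. -/

import Mathlib

/-! Replacing the hyperedge of `F(c₀, h)` by `F(c, p)` glues the node `p σ` of the copy to the
node `h (p σ)`, so the result is `F(c, h ∘ p)`. Hence every sentential form derived from `S•` is
isomorphic to some `F(S, h)` or `F(a, h)`, and `F(S, h)` is reachable for every `h` in the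
monoid generated by `f` and `g`; in the finite group `Sym(n)` this monoid is the subgroup they
generate, i.e. everything. An isomorphism `F(a, h) ≅ F(a, h')` is the identity on nodes because
all nodes are external, so comparing attachments gives `h = h'`. -/

namespace HRGPaper

universe u

/-- A hypergraph over a `Finset ℕ`-typed alphabet `C` with typing function `tc`. -/
structure Hypergraph (C : Type u) (tc : C → Finset ℕ) : Type (max u 1) where
  V : Type
  E : Type
  finV : Finite V
  finE : Finite E
  lab : E → C
  att : (e : E) → (σ : ℕ) → σ ∈ tc (lab e) → V
  extType : Finset ℕ
  ext : (σ : ℕ) → σ ∈ extType → V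

variable {C : Type u} {tc : C → Finset ℕ}

/-- An isomorphism of hypergraphs. -/
structure HIso (H K : Hypergraph C tc) where
  vE : H.V ≃ K.V
  eE : H.E ≃ K.E
  lab_eq : ∀ e, K.lab (eE e) = H.lab e
  att_eq : ∀ (e : H.E) (σ : ℕ) (h : σ ∈ tc (H.lab e)) (h' : σ ∈ tc (K.lab (eE e))),
    K.att (eE e) σ h' = vE (H.att e σ h)
  extType_eq : K.extType = H.extType
  ext_eq : ∀ (σ : ℕ) (h : σ ∈ H.extType) (h' : σ ∈ K.extType),
    K.ext σ h' = vE (H.ext σ h)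

/-- Two hypergraphs are isomorphic. -/
def IsIso (H K : Hypergraph C tc) : Prop := Nonempty (HIso H K)

/-- The handle `c•` of a label `c`. -/
def handle (c : C) : Hypergraph C tc where
  V := {σ : ℕ // σ ∈ tc c}
  E := PUnit
  finV := inferInstance
  finE := inferInstance
  lab := fun _ => c
  att := fun _ σ h => ⟨σ, h⟩
  extType := tc c
  ext := fun σ h => ⟨σ, h⟩

/-- The gluing relation used for hyperedge replacement: the attachment node of `e`
with selector `σ` gets identified with the external node of `K` with selector `σ`. -/
def glueRel (H : Hypergraph C tc) (e : H.E) (K : Hypergraph C tc) :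
    (H.V ⊕ K.V) → (H.V ⊕ K.V) → Prop := fun x y =>
  ∃ (σ : ℕ) (h : σ ∈ tc (H.lab e)) (h' : σ ∈ K.extType),
    x = Sum.inl (H.att e σ h) ∧ y = Sum.inr (K.ext σ h')

/-- The replacement `H[e/K]` of the hyperedge `e` in `H` by the hypergraph `K`. -/
def replace (H : Hypergraph C tc) (e : H.E) (K : Hypergraph C tc) : Hypergraph C tc where
  V := Quot (glueRel H e K)
  E := {e' : H.E // e' ≠ e} ⊕ K.E
  finV := by haveI := H.finV; haveI := K.finV; infer_instance
  finE := by haveI := H.finE; haveI := K.finE; infer_instance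
  lab := Sum.elim (fun e' => H.lab e'.1) K.lab
  att := fun e' => Sum.rec (motive := fun e' => (σ : ℕ) →
      σ ∈ tc (Sum.elim (fun e'' : {e' : H.E // e' ≠ e} => H.lab e''.1) K.lab e') →
      Quot (glueRel H e K))
    (fun e₀ σ h => Quot.mk _ (Sum.inl (H.att e₀.1 σ h)))
    (fun eK σ h => Quot.mk _ (Sum.inr (K.att eK σ h))) e'
  extType := H.extType
  ext := fun σ h => Quot.mk _ (Sum.inl (H.ext σ h))

/-- A hyperedge replacement grammar over the typed alphabet `C`; `isNT` singles out the
nonterminal labels, the remaining labels being terminal. -/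
structure HRG (C : Type u) (tc : C → Finset ℕ) where
  isNT : C → Prop
  finC : Finite C
  P : Set (C × Hypergraph C tc)
  finP : P.Finite
  lhs_nt : ∀ p ∈ P, isNT p.1
  rhs_type : ∀ p ∈ P, p.2.extType = tc p.1
  S : C
  S_nt : isNT S

/-- One derivation step of an HRG: replace a hyperedge labeled by the left-hand side of a
production with the right-hand side of that production. -/
def Step (Γ : HRG C tc) (H H' : Hypergraph C tc) : Prop :=
  ∃ (e : H.E) (p : C × Hypergraph C tc), p ∈ Γ.P ∧ H.lab e = p.1 ∧ H' = replace H e p.2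

/-- The derivability relation `⇒*` of an HRG. -/
def Derives (Γ : HRG C tc) : Hypergraph C tc → Hypergraph C tc → Prop :=
  Relation.ReflTransGen (Step Γ)

/-- Derivability in exactly `k` steps. -/
inductive DerivesIn (Γ : HRG C tc) : ℕ → Hypergraph C tc → Hypergraph C tc → Prop
  | refl (H : Hypergraph C tc) : DerivesIn Γ 0 H H
  | tail {k H H' H''} : DerivesIn Γ k H H' → Step Γ H' H'' → DerivesIn Γ (k + 1) H H''

/-- The language of an HRG: all hypergraphs with terminal labels only that are isomorphic to a
hypergraph derivable from the handle of the start symbol (i.e. the language is considered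
up to isomorphism). -/
def Lang (Γ : HRG C tc) : Set (Hypergraph C tc) :=
  {H | (∀ e : H.E, ¬ Γ.isNT (H.lab e)) ∧ ∃ H', Derives Γ (handle Γ.S) H' ∧ IsIso H' H}

/-- The string graph of the word `w`. -/
def SG (w : List C) : Hypergraph C tc where
  V := Fin (w.length + 1)
  E := Fin w.length
  finV := inferInstance
  finE := inferInstance
  lab := fun i => w.get i
  att := fun i σ _ => if σ = 1 then i.castSucc else i.succ
  extType := {1, 2}
  ext := fun σ _ => if σ = 1 then 0 else Fin.last w.length

/-- An HRG is string-generating if every hypergraph of its language is a string graph. -/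
def IsStringGenerating (Γ : HRG C tc) : Prop :=
  ∀ H ∈ Lang Γ, ∃ w : List C, IsIso H (SG w)

/-- A hypergraph is repetition-free if its external map and all its attachment maps
are injective. -/
def RepFree (H : Hypergraph C tc) : Prop :=
  (∀ (σ₁ σ₂ : ℕ) (h₁ : σ₁ ∈ H.extType) (h₂ : σ₂ ∈ H.extType),
      H.ext σ₁ h₁ = H.ext σ₂ h₂ → σ₁ = σ₂) ∧
  (∀ (e : H.E) (σ₁ σ₂ : ℕ) (h₁ : σ₁ ∈ tc (H.lab e)) (h₂ : σ₂ ∈ tc (H.lab e)),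
      H.att e σ₁ h₁ = H.att e σ₂ h₂ → σ₁ = σ₂)

/-- An HRG is repetition-free if all right-hand sides of its productions are repetition-free. -/
def RepFreeGrammar (Γ : HRG C tc) : Prop := ∀ p ∈ Γ.P, RepFree p.2

/-- The size of a hypergraph: number of nodes plus number of hyperedges plus the total number
of attachment nodes of its hyperedges. -/
noncomputable def hgSize (D : Hypergraph C tc) : ℕ :=
  Nat.card D.V + Nat.card D.E + Nat.card ((e : D.E) × {σ : ℕ // σ ∈ tc (D.lab e)})

/-- The size of a production. -/
noncomputable def prodSize (p : C × Hypergraph C tc) : ℕ :=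
  (tc p.1).card + hgSize p.2

/-- The size of an HRG. -/
noncomputable def hrgSize (Γ : HRG C tc) : ℕ :=
  ∑ p ∈ Γ.finP.toFinset, prodSize p

/-- The hypergraph `F(X, f)`: nodes `[n] = {1,…,n}`, a single hyperedge labeled `X`
whose attachment node for selector `j` is `f j`, and all nodes external via `ext j = j`. -/
def Fgraph (X : C) (n : ℕ) (hX : tc X = Finset.Icc 1 n) (f : ℕ → ℕ)
    (hf : ∀ j ∈ Finset.Icc 1 n, f j ∈ Finset.Icc 1 n) : Hypergraph C tc where
  V := {j : ℕ // j ∈ Finset.Icc 1 n}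
  E := PUnit
  finV := inferInstanceAs (Finite ↥(Finset.Icc 1 n))
  finE := inferInstance
  lab := fun _ => X
  att := fun _ σ h => ⟨f σ, hf σ (hX ▸ h)⟩
  extType := Finset.Icc 1 n
  ext := fun σ h => ⟨σ, h⟩

/-- A node is external if it is in the range of the external map. -/
def IsExternal (H : Hypergraph C tc) (v : H.V) : Prop :=
  ∃ (σ : ℕ) (h : σ ∈ H.extType), H.ext σ h = v

/-- A permutation of `[n] = {1,…,n}` viewed as a function `ℕ → ℕ` (identity off `[n]`). -/
def permToFun {n : ℕ} (π : Equiv.Perm {j : ℕ // j ∈ Finset.Icc 1 n}) : ℕ → ℕ :=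
  fun j => if h : j ∈ Finset.Icc 1 n then (π ⟨j, h⟩).1 else j

theorem permToFun_mem {n : ℕ} (π : Equiv.Perm {j : ℕ // j ∈ Finset.Icc 1 n}) :
    ∀ j ∈ Finset.Icc 1 n, permToFun π j ∈ Finset.Icc 1 n := by
  intro j hj
  simp only [permToFun, dif_pos hj]
  exact (π ⟨j, hj⟩).2

/-- The HRG of Example `all permutations`: labels `Bool` (nonterminal `S = true`,
terminal `a = false`, both of type `[n]`), productions `p(f)`, `p(g)` and `S → a•`. -/
def permGrammar (n : ℕ) (f g : Equiv.Perm {j : ℕ // j ∈ Finset.Icc 1 n}) :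
    HRG Bool (fun _ => Finset.Icc 1 n) where
  isNT := fun c => c = true
  finC := inferInstance
  P := {((true : Bool), Fgraph true n rfl (permToFun f) (permToFun_mem f)),
        ((true : Bool), Fgraph true n rfl (permToFun g) (permToFun_mem g)),
        ((true : Bool), handle false)}
  finP := (Set.finite_singleton _).insert _ |>.insert _
  lhs_nt := by
    rintro p hp
    rcases hp with rfl | rfl | rfl <;> rfl
  rhs_type := by
    rintro p hp
    rcases hp with rfl | rfl | rfl <;> rfl
  S := true
  S_nt := rfl

namespace HIso

def refl (H : Hypergraph C tc) : HIso H H where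
  vE := Equiv.refl _
  eE := Equiv.refl _
  lab_eq _ := rfl
  att_eq _ _ _ _ := rfl
  extType_eq := rfl
  ext_eq _ _ _ := rfl

def symm {H K : Hypergraph C tc} (φ : HIso H K) : HIso K H where
  vE := φ.vE.symm
  eE := φ.eE.symm
  lab_eq e := by rw [← φ.lab_eq, Equiv.apply_symm_apply]
  att_eq e σ h h' := by
    have h₂ : σ ∈ tc (K.lab (φ.eE (φ.eE.symm e))) := by rwa [Equiv.apply_symm_apply]
    rw [Equiv.eq_symm_apply, ← φ.att_eq (φ.eE.symm e) σ h' h₂]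
    congr 1
    exact φ.eE.apply_symm_apply e
  extType_eq := φ.extType_eq.symm
  ext_eq σ h h' := by rw [Equiv.eq_symm_apply, φ.ext_eq σ h' h]

def trans {H K L : Hypergraph C tc} (φ : HIso H K) (ψ : HIso K L) : HIso H L where
  vE := φ.vE.trans ψ.vE
  eE := φ.eE.trans ψ.eE
  lab_eq e := by rw [Equiv.trans_apply, ψ.lab_eq, φ.lab_eq]
  att_eq e σ h h' := by
    have h₂ : σ ∈ tc (K.lab (φ.eE e)) := φ.lab_eq e ▸ h
    exact (ψ.att_eq (φ.eE e) σ h₂ h').trans (congrArg ψ.vE (φ.att_eq e σ h h₂))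
  extType_eq := ψ.extType_eq.trans φ.extType_eq
  ext_eq σ h h' := by
    have h₂ : σ ∈ K.extType := φ.extType_eq ▸ h
    exact (ψ.ext_eq σ h₂ h').trans (congrArg ψ.vE (φ.ext_eq σ h h₂))

def replaceCongrLeft {H K : Hypergraph C tc} (φ : HIso H K) (e : H.E) (D : Hypergraph C tc) :
    HIso (replace H e D) (replace K (φ.eE e) D) where
  vE := Quot.congr (Equiv.sumCongr φ.vE (Equiv.refl D.V)) (by
    rintro x y
    constructor
    · rintro ⟨σ, h, h', rfl, rfl⟩
      have h₂ : σ ∈ tc (K.lab (φ.eE e)) := φ.lab_eq e ▸ h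
      exact ⟨σ, h₂, h', by rw [φ.att_eq e σ h h₂]; rfl, rfl⟩
    · rintro ⟨σ, h, h', hx, hy⟩
      have h₂ : σ ∈ tc (H.lab e) := by rwa [← φ.lab_eq e]
      refine ⟨σ, h₂, h', ?_, ?_⟩
      · rcases x with v | v
        · simp only [Equiv.sumCongr_apply, Sum.map_inl, Sum.inl.injEq] at hx ⊢
          apply φ.vE.injective
          rw [hx, φ.att_eq e σ h₂ h]
        · simp at hx
      · rcases y with v | v
        · simp at hy
        · simpa using hy)
  eE := Equiv.sumCongr
    (φ.eE.subtypeEquiv fun _ => φ.eE.injective.ne_iff.symm)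
    (Equiv.refl D.E)
  lab_eq := by
    rintro (e' | d)
    · exact φ.lab_eq e'.1
    · rfl
  att_eq := by
    rintro (e' | d) σ h h'
    · exact congrArg (fun v => Quot.mk _ (Sum.inl v)) (φ.att_eq e'.1 σ h h')
    · rfl
  extType_eq := φ.extType_eq
  ext_eq σ h h' := congrArg (fun v => Quot.mk _ (Sum.inl v)) (φ.ext_eq σ h h')

def replaceCongrRight (H : Hypergraph C tc) (e : H.E) {D D' : Hypergraph C tc}
    (ψ : HIso D D') : HIso (replace H e D) (replace H e D') where
  vE := Quot.congr (Equiv.sumCongr (Equiv.refl H.V) ψ.vE) (by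
    rintro x y
    constructor
    · rintro ⟨σ, h, h', rfl, rfl⟩
      have h₂ : σ ∈ D'.extType := ψ.extType_eq ▸ h'
      exact ⟨σ, h, h₂, rfl, by rw [ψ.ext_eq σ h' h₂]; rfl⟩
    · rintro ⟨σ, h, h', hx, hy⟩
      have h₂ : σ ∈ D.extType := by rwa [← ψ.extType_eq]
      refine ⟨σ, h, h₂, ?_, ?_⟩
      · rcases x with v | v
        · simpa using hx
        · simp at hx
      · rcases y with v | v
        · simp at hy
        · simp only [Equiv.sumCongr_apply, Sum.map_inr, Sum.inr.injEq] at hy ⊢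
          apply ψ.vE.injective
          rw [hy, ψ.ext_eq σ h₂ h'])
  eE := Equiv.sumCongr (Equiv.refl _) ψ.eE
  lab_eq := by
    rintro (e' | d)
    · rfl
    · exact ψ.lab_eq d
  att_eq := by
    rintro (e' | d) σ h h'
    · rfl
    · exact congrArg (fun v => Quot.mk _ (Sum.inr v)) (ψ.att_eq d σ h h')
  extType_eq := rfl
  ext_eq _ _ _ := rfl

end HIso

theorem IsIso.symm {H K : Hypergraph C tc} : IsIso H K → IsIso K H
  | ⟨φ⟩ => ⟨φ.symm⟩

theorem IsIso.trans {H K L : Hypergraph C tc} : IsIso H K → IsIso K L → IsIso H L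
  | ⟨φ⟩, ⟨ψ⟩ => ⟨φ.trans ψ⟩

section Fperm

variable {n : ℕ}

abbrev Sel (n : ℕ) := {j : ℕ // j ∈ Finset.Icc 1 n}

abbrev Fperm (c : C) (h : Equiv.Perm (Sel n)) : Hypergraph C (fun _ => Finset.Icc 1 n) :=
  Fgraph c n rfl (permToFun h) (permToFun_mem h)

theorem permToFun_apply (h : Equiv.Perm (Sel n)) (v : Sel n) : permToFun h v = h v := by
  simp [permToFun, v.2]

theorem Fperm_att (c : C) (h : Equiv.Perm (Sel n)) (e : (Fperm c h).E) (σ : ℕ)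
    (hσ : σ ∈ Finset.Icc 1 n) :
    (Fperm c h).att e σ hσ = h ⟨σ, hσ⟩ :=
  Subtype.ext (permToFun_apply h ⟨σ, hσ⟩)

def HIso.handleFperm (c : C) :
    HIso (handle (tc := fun _ => Finset.Icc 1 n) c) (Fperm c (1 : Equiv.Perm (Sel n))) where
  vE := Equiv.refl _
  eE := Equiv.refl _
  lab_eq _ := rfl
  att_eq _ σ h _ := Fperm_att c 1 _ σ h
  extType_eq := rfl
  ext_eq _ _ _ := rfl

def HIso.replaceFperm (c₀ c : C) (h p : Equiv.Perm (Sel n)) :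
    HIso (replace (Fperm c₀ h) PUnit.unit (Fperm c p)) (Fperm c (h * p)) where
  vE :=
    { toFun := Quot.lift (Sum.elim id h) (by
        rintro _ _ ⟨σ, hσ, hσ', rfl, rfl⟩
        exact Fperm_att c₀ h _ σ hσ)
      invFun v := Quot.mk _ (Sum.inl v)
      left_inv := by
        rintro ⟨v | w⟩
        · rfl
        · exact Quot.sound ⟨w.1, w.2, w.2, congrArg Sum.inl (Fperm_att c₀ h _ w.1 w.2).symm, rfl⟩
      right_inv _ := rfl }
  eE :=
    { toFun _ := PUnit.unit
      invFun _ := Sum.inr PUnit.unit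
      left_inv := by
        rintro (⟨⟨⟩, he⟩ | ⟨⟩)
        · exact absurd rfl he
        · rfl
      right_inv _ := rfl }
  lab_eq := by
    rintro (⟨⟨⟩, he⟩ | ⟨⟩)
    · exact absurd rfl he
    · rfl
  att_eq := by
    rintro (⟨⟨⟩, he⟩ | ⟨⟩) σ hσ _
    · exact absurd rfl he
    · show _ = h ((Fperm c p).att _ σ hσ)
      rw [Fperm_att, Fperm_att]
      rfl
  extType_eq := rfl
  ext_eq _ _ _ := rfl

theorem isIso_replace_Fperm {H D : Hypergraph C (fun _ => Finset.Icc 1 n)} {c₀ c : C}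
    {h p : Equiv.Perm (Sel n)} (hH : IsIso H (Fperm c₀ h)) (hD : IsIso D (Fperm c p))
    (e : H.E) : IsIso (replace H e D) (Fperm c (h * p)) := by
  obtain ⟨φ⟩ := hH
  obtain ⟨ψ⟩ := hD
  exact ⟨(φ.replaceCongrLeft e D).trans
    ((HIso.replaceCongrRight _ _ ψ).trans (HIso.replaceFperm c₀ c h p))⟩

theorem lab_eq_of_isIso_Fperm {H : Hypergraph C (fun _ => Finset.Icc 1 n)} {c : C}
    {h : Equiv.Perm (Sel n)} (hH : IsIso H (Fperm c h)) (e : H.E) : H.lab e = c :=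
  (hH.some.lab_eq e).symm

theorem Fperm_isIso_Fperm_iff {c : C} {h h' : Equiv.Perm (Sel n)} :
    IsIso (Fperm c h) (Fperm c h') ↔ h = h' := by
  refine ⟨fun ⟨φ⟩ => Equiv.ext fun v => ?_, fun hh => hh ▸ ⟨HIso.refl _⟩⟩
  have hvE : φ.vE (h v) = h v := (φ.ext_eq _ (h v).2 (h v).2).symm
  have hatt : h' v = φ.vE (h v) :=
    (Fperm_att c h' _ v.1 v.2).symm.trans
      ((φ.att_eq PUnit.unit v.1 v.2 v.2).trans (congrArg φ.vE (Fperm_att c h _ v.1 v.2)))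
  exact (hatt.trans hvE).symm

end Fperm

section permGrammar

variable {n : ℕ} (f g : Equiv.Perm (Sel n))

theorem permGrammar_rhs_isIso :
    ∀ q ∈ (permGrammar n f g).P, ∃ (c : Bool) (p : Equiv.Perm (Sel n)), IsIso q.2 (Fperm c p) := by
  rintro q (rfl | rfl | rfl)
  · exact ⟨true, f, ⟨HIso.refl _⟩⟩
  · exact ⟨true, g, ⟨HIso.refl _⟩⟩
  · exact ⟨false, 1, ⟨HIso.handleFperm false⟩⟩

theorem permGrammar_derives_isIso {H : Hypergraph Bool (fun _ => Finset.Icc 1 n)}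
    (hd : Derives (permGrammar n f g) (handle true) H) :
    ∃ (c : Bool) (h : Equiv.Perm (Sel n)), IsIso H (Fperm c h) := by
  induction hd with
  | refl => exact ⟨true, 1, ⟨HIso.handleFperm true⟩⟩
  | tail _ hstep ih =>
    obtain ⟨e, q, hq, -, rfl⟩ := hstep
    obtain ⟨_, h, hH⟩ := ih
    obtain ⟨c, p, hD⟩ := permGrammar_rhs_isIso f g q hq
    exact ⟨c, h * p, isIso_replace_Fperm hH hD e⟩

theorem permGrammar_derives_replace {H D : Hypergraph Bool (fun _ => Finset.Icc 1 n)} {c : Bool}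
    {h p : Equiv.Perm (Sel n)} (hd : Derives (permGrammar n f g) (handle true) H)
    (hH : IsIso H (Fperm true h)) (hP : (true, D) ∈ (permGrammar n f g).P)
    (hD : IsIso D (Fperm c p)) :
    ∃ H', Derives (permGrammar n f g) (handle true) H' ∧ IsIso H' (Fperm c (h * p)) := by
  obtain ⟨φ⟩ := hH
  let e := φ.eE.symm PUnit.unit
  exact ⟨replace H e D, hd.tail ⟨e, _, hP, lab_eq_of_isIso_Fperm ⟨φ⟩ e, rfl⟩,
    isIso_replace_Fperm ⟨φ⟩ hD e⟩

theorem permGrammar_derives_of_mem_closure {h : Equiv.Perm (Sel n)}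
    (hh : h ∈ Submonoid.closure {f, g}) :
    ∃ H, Derives (permGrammar n f g) (handle true) H ∧ IsIso H (Fperm true h) := by
  induction hh using Submonoid.closure_induction_right with
  | one => exact ⟨handle true, Relation.ReflTransGen.refl, ⟨HIso.handleFperm true⟩⟩
  | mul_right x _ y hy ih =>
    obtain ⟨H, hd, hH⟩ := ih
    rcases hy with hy | hy <;> subst y
    · exact permGrammar_derives_replace f g hd hH (Or.inl rfl) ⟨HIso.refl _⟩
    · exact permGrammar_derives_replace f g hd hH (Or.inr (Or.inl rfl)) ⟨HIso.refl _⟩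

theorem lang_permGrammar (hgen : Subgroup.closure {f, g} = ⊤) :
    Lang (permGrammar n f g) = {H | ∃ h : Equiv.Perm (Sel n), IsIso H (Fperm false h)} := by
  ext H
  constructor
  · rintro ⟨hterm, H', hd, hH'⟩
    obtain ⟨c, h, hiso⟩ := permGrammar_derives_isIso f g hd
    have hH : IsIso H (Fperm c h) := hH'.symm.trans hiso
    obtain rfl : c = false := by
      simpa [permGrammar, lab_eq_of_isIso_Fperm hH] using hterm (hH.some.eE.symm PUnit.unit)
    exact ⟨h, hH⟩
  · rintro ⟨h, hH⟩
    refine ⟨fun e => by simp [permGrammar, lab_eq_of_isIso_Fperm hH e], ?_⟩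
    have hh : h ∈ Submonoid.closure {f, g} := by
      rw [← Subgroup.closure_toSubmonoid_of_finite, hgen]
      exact Subgroup.mem_top h
    obtain ⟨H', hd, hH'⟩ := permGrammar_derives_of_mem_closure f g hh
    obtain ⟨H'', hd', hH''⟩ := permGrammar_derives_replace f g hd hH' (Or.inr (Or.inr rfl))
      ⟨HIso.handleFperm false⟩
    rw [mul_one] at hH''
    exact ⟨H'', hd', hH''.trans hH.symm⟩

theorem ncard_permGrammar_P_le : (permGrammar n f g).P.ncard ≤ 3 := by
  classical
  show ({_, _, _} : Set _).ncard ≤ 3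
  rw [← Finset.coe_singleton, ← Finset.coe_insert, ← Finset.coe_insert, Set.ncard_coe_finset]
  exact Finset.card_le_three

end permGrammar

theorem stmt_2_general (n : ℕ) (f g : Equiv.Perm {j : ℕ // j ∈ Finset.Icc 1 n})
    (hgen : Subgroup.closure {f, g} = (⊤ : Subgroup (Equiv.Perm {j : ℕ // j ∈ Finset.Icc 1 n}))) :
    Lang (permGrammar n f g) =
      {H | ∃ h : Equiv.Perm {j : ℕ // j ∈ Finset.Icc 1 n},
        IsIso H (Fgraph false n rfl (permToFun h) (permToFun_mem h))} ∧
    (∀ h h' : Equiv.Perm {j : ℕ // j ∈ Finset.Icc 1 n},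
      IsIso (Fgraph (tc := fun _ : Bool => Finset.Icc 1 n) false n rfl
              (permToFun h) (permToFun_mem h))
            (Fgraph false n rfl (permToFun h') (permToFun_mem h')) ↔ h = h') ∧
    Nat.card (Equiv.Perm {j : ℕ // j ∈ Finset.Icc 1 n}) = Nat.factorial n ∧
    Nat.card (permGrammar n f g).P ≤ 3 := by
  refine ⟨lang_permGrammar f g hgen, fun _ _ => Fperm_isIso_Fperm_iff, ?_, ?_⟩
  · rw [Nat.card_perm, Nat.card_eq_fintype_card, Fintype.card_coe, Nat.card_Icc,
      Nat.add_sub_cancel]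
  · rw [Nat.card_coe_set_eq]
    exact ncard_permGrammar_P_le f g

/-- If the permutations `f, g` generate the full symmetric group on `[n]`,
then the language of the 3-production grammar `G` consists precisely of the hypergraphs
`F(a, h)` for permutations `h` of `[n]`; distinct permutations give non-isomorphic
hypergraphs, so `L(G)` contains exactly `n!` pairwise non-isomorphic hypergraphs, whereas
`G` has only (at most) `3` productions. -/
theorem stmt_2 (n : ℕ) (hn : 1 ≤ n) (f g : Equiv.Perm {j : ℕ // j ∈ Finset.Icc 1 n})
    (hgen : Subgroup.closure {f, g} = (⊤ : Subgroup (Equiv.Perm {j : ℕ // j ∈ Finset.Icc 1 n}))) :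
    Lang (permGrammar n f g) =
      {H | ∃ h : Equiv.Perm {j : ℕ // j ∈ Finset.Icc 1 n},
        IsIso H (Fgraph false n rfl (permToFun h) (permToFun_mem h))} ∧
    (∀ h h' : Equiv.Perm {j : ℕ // j ∈ Finset.Icc 1 n},
      IsIso (Fgraph (tc := fun _ : Bool => Finset.Icc 1 n) false n rfl
              (permToFun h) (permToFun_mem h))
            (Fgraph false n rfl (permToFun h') (permToFun_mem h')) ↔ h = h') ∧
    Nat.card (Equiv.Perm {j : ℕ // j ∈ Finset.Icc 1 n}) = Nat.factorial n ∧
    Nat.card (permGrammar n f g).P ≤ 3 :=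
  stmt_2_general n f g hgen

end HRGPaper
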